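/- arXiv:1906.01584 — 3 statements merged into one kernel-verified Lean document; each statement's English description precedes it below -/
import Mathlib

section
/- Let D be a symmetric positive semidefinite d×d real matrix (d = n+p), let X be a d×n real matrix, and suppose vec(Xᵀ)ᵀ (D ⊗ Iₙ) vec(Xᵀ) ≤ 1. Then I - XᵀDX is positive semidefinite. -/
open Matrix Kronecker

/-- `vec'` stacks the columns of a matrix: the component at index `(j, i)`
(column `j`, row `i`) is `A i j`. -/
def vec' {a b : ℕ} (A : Matrix (Fin a) (Fin b) ℝ) : Fin b × Fin a → ℝ :=
  fun p => A p.2 p.1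

-- general lemma: PSD M with trace ≤ 1 implies 1 - M PSD
lemma psd_one_sub {m : ℕ} {M : Matrix (Fin m) (Fin m) ℝ} (hM : M.PosSemidef)
    (ht : M.trace ≤ 1) : ((1 : Matrix (Fin m) (Fin m) ℝ) - M).PosSemidef := by
  open scoped MatrixOrder in
  have hC : (0 : Matrix (Fin m) (Fin m) ℝ) ≤ CFC.sqrt M := CFC.sqrt_nonneg M
  open scoped MatrixOrder in
  set C := CFC.sqrt M with hCdef
  open scoped MatrixOrder in
  have hCsq : C * C = M := CFC.sqrt_mul_sqrt_self M (Matrix.nonneg_iff_posSemidef.mpr hM)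
  have hCsym : Cᵀ = C := by
    have := hC.isSelfAdjoint
    simpa [IsSelfAdjoint, Matrix.star_eq_conjTranspose, Matrix.conjTranspose_eq_transpose_of_trivial] using this
  refine Matrix.PosSemidef.of_dotProduct_mulVec_nonneg ?_ ?_
  · have := hM.isHermitian
    simp [Matrix.IsHermitian] at this ⊢
    exact this
  · intro x
    simp only [star_trivial, RCLike.re_to_real]
    have key : x ⬝ᵥ M *ᵥ x ≤ M.trace * (x ⬝ᵥ x) := by
      have h1 : x ⬝ᵥ M *ᵥ x = (C *ᵥ x) ⬝ᵥ (C *ᵥ x) := by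
        rw [← hCsq, ← Matrix.mulVec_mulVec, dotProduct_mulVec,
          ← Matrix.vecMul_transpose, hCsym]
      have h2 : M.trace = ∑ i, ∑ j, (C i j)^2 := by
        rw [← hCsq, Matrix.trace]
        simp only [Matrix.diag, Matrix.mul_apply]
        congr 1; ext i; congr 1; ext j
        have : C j i = C i j := by
          conv_lhs => rw [← hCsym]
          rfl
        rw [this, sq]
      rw [h1, h2, Finset.sum_mul]
      apply Finset.sum_le_sum
      intro i _
      simp only [Matrix.mulVec, dotProduct]
      calc (∑ j, C i j * x j) * (∑ j, C i j * x j)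
          = (∑ j, C i j * x j)^2 := (sq _).symm
        _ ≤ (∑ j, (C i j)^2) * (∑ j, (x j)^2) :=
            Finset.sum_mul_sq_le_sq_mul_sq _ _ _
        _ = (∑ j, (C i j)^2) * (x ⬝ᵥ x) := by
            simp [dotProduct, sq]
    have hxx : (0:ℝ) ≤ x ⬝ᵥ x := by
      exact Finset.sum_nonneg fun j _ => mul_self_nonneg _
    have : M.trace * (x ⬝ᵥ x) ≤ 1 * (x ⬝ᵥ x) := by
      apply mul_le_mul_of_nonneg_right ht hxx
    have hsub : x ⬝ᵥ ((1 : Matrix (Fin m) (Fin m) ℝ) - M) *ᵥ x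
        = x ⬝ᵥ x - x ⬝ᵥ M *ᵥ x := by
      rw [Matrix.sub_mulVec, dotProduct_sub, Matrix.one_mulVec]
    rw [hsub]
    linarith

theorem spectral_bound_of_vec_quadratic_form_le_one {n p : ℕ}
    (D : Matrix (Fin (n + p)) (Fin (n + p)) ℝ) (hD : D.PosSemidef)
    (X : Matrix (Fin (n + p)) (Fin n) ℝ)
    (h : vec' Xᵀ ⬝ᵥ (D ⊗ₖ (1 : Matrix (Fin n) (Fin n) ℝ)).mulVec (vec' Xᵀ) ≤ 1) :
    ((1 : Matrix (Fin n) (Fin n) ℝ) - Xᵀ * D * X).PosSemidef := by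
  have hpsd : (Xᵀ * D * X).PosSemidef := by
    have := hD.conjTranspose_mul_mul_same X
    simpa using this
  apply psd_one_sub hpsd
  have htr : (Xᵀ * D * X).trace
      = vec' Xᵀ ⬝ᵥ (D ⊗ₖ (1 : Matrix (Fin n) (Fin n) ℝ)).mulVec (vec' Xᵀ) := by
    simp only [Matrix.trace, Matrix.diag, Matrix.mul_apply, dotProduct,
      Matrix.mulVec, vec', Matrix.kroneckerMap_apply, Matrix.one_apply,
      Fintype.sum_prod_type, Matrix.transpose_apply, mul_ite, mul_one, mul_zero,
      ite_mul, zero_mul, Finset.sum_ite_eq, Finset.mem_univ, if_true,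
      Finset.sum_mul, Finset.mul_sum]
    rw [Finset.sum_comm]
    refine Finset.sum_congr rfl fun a _ => ?_
    refine Finset.sum_congr rfl fun i _ => Finset.sum_congr rfl fun b _ => ?_
    rw [show D b a = D a b from (congrFun (congrFun hD.1 b) a).symm]
    ring
  rw [htr]; exact h
end

section
/- Suppose W and W' are symmetric n×n real matrices, A is n×n with spectral radius less than 1, V is symmetric positive semidefinite, W' = A W' Aᵀ + V (exact Lyapunov equation solution), and W ⪰ A W Aᵀ + V (Lyapunov inequality). Then W ⪰ W', i.e., W - W' is positive semidefinite. -/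
open Matrix

open Filter Topology
open scoped ENNReal NNReal

attribute [local instance] Matrix.linftyOpNormedAddCommGroup Matrix.linftyOpNormedRing
  Matrix.linftyOpNormedAlgebra

lemma pow_entry_tendsto_zero {n : ℕ} (B : Matrix (Fin n) (Fin n) ℂ)
    (hB : ∀ μ ∈ spectrum ℂ B, ‖μ‖ < 1) (i j : Fin n) :
    Tendsto (fun N => (B ^ N) i j) atTop (𝓝 0) := by
  have : CompleteSpace (Matrix (Fin n) (Fin n) ℂ) := FiniteDimensional.complete ℂ _
  -- spectral radius < 1
  have hsr : spectralRadius ℂ B < 1 := by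
    rcases (spectrum ℂ B).eq_empty_or_nonempty with h | h
    · simp [spectralRadius, h]
    · obtain ⟨μ, hμ, hmax⟩ := (spectrum.isCompact B).exists_isMaxOn h
        continuous_norm.continuousOn
      have h1 : spectralRadius ℂ B ≤ (‖μ‖₊ : ℝ≥0∞) := by
        refine iSup₂_le fun k hk => ?_
        have : ‖k‖ ≤ ‖μ‖ := hmax hk
        exact_mod_cast this
      refine lt_of_le_of_lt h1 ?_
      have h2 : ‖μ‖₊ < 1 := by
        rw [← NNReal.coe_lt_coe]
        simpa using hB μ hμ
      exact_mod_cast h2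
  -- powers tend to zero in norm
  have hpow : Tendsto (fun N => ‖B ^ N‖₊ : ℕ → ℝ≥0∞) atTop (𝓝 0) := by
    obtain ⟨c, hc1, hc2⟩ := exists_between hsr
    have hgel := spectrum.pow_nnnorm_pow_one_div_tendsto_nhds_spectralRadius B
    have hev : ∀ᶠ N : ℕ in atTop, (‖B ^ N‖₊ : ℝ≥0∞) ≤ c ^ N := by
      filter_upwards [hgel.eventually_lt_const hc1, eventually_ge_atTop 1] with N hN hN1
      have hNne : (N : ℝ) ≠ 0 := by positivity
      calc (‖B ^ N‖₊ : ℝ≥0∞) = ((‖B ^ N‖₊ : ℝ≥0∞) ^ (1 / N : ℝ)) ^ (N : ℝ) := by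
            rw [← ENNReal.rpow_mul, one_div, inv_mul_cancel₀ hNne, ENNReal.rpow_one]
        _ ≤ c ^ (N : ℝ) := by
            exact ENNReal.rpow_le_rpow hN.le (by positivity)
        _ = c ^ N := ENNReal.rpow_natCast c N
    have hcpow : Tendsto (fun N : ℕ => c ^ N) atTop (𝓝 0) :=
      ENNReal.tendsto_pow_atTop_nhds_zero_of_lt_one hc2
    exact tendsto_of_tendsto_of_tendsto_of_le_of_le' tendsto_const_nhds hcpow
      (Eventually.of_forall fun _ => zero_le) hev
  have hpow' : Tendsto (fun N => B ^ N) atTop (𝓝 0) := by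
    rw [← ENNReal.coe_zero] at hpow
    refine tendsto_zero_iff_norm_tendsto_zero.mpr ?_
    have := ENNReal.tendsto_coe.mp hpow
    exact NNReal.tendsto_coe.mpr this |>.congr (fun N => by simp [coe_nnnorm])
  -- entry evaluation
  let ev : Matrix (Fin n) (Fin n) ℂ →ₗ[ℂ] ℂ :=
    (LinearMap.proj (R := ℂ) (φ := fun _ : Fin n => ℂ) j).comp
      (LinearMap.proj (R := ℂ) (φ := fun _ : Fin n => Fin n → ℂ) i)
  have hev : Continuous ev := ev.continuous_of_finiteDimensional
  have := (hev.tendsto 0).comp hpow'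
  rw [map_zero] at this
  exact this

theorem lyapunov_inequality_dominates_equation {n : ℕ}
    (A : Matrix (Fin n) (Fin n) ℝ)
    (hA : ∀ μ ∈ spectrum ℂ (A.map (algebraMap ℝ ℂ)), ‖μ‖ < 1)
    (V : Matrix (Fin n) (Fin n) ℝ) (hV : V.PosSemidef)
    (W W' : Matrix (Fin n) (Fin n) ℝ) (hW : Wᵀ = W) (hW' : W'ᵀ = W')
    (heq : W' = A * W' * Aᵀ + V)
    (hineq : (W - (A * W * Aᵀ + V)).PosSemidef) :
    (W - W').PosSemidef := by
  set D := W - W' with hD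
  set P := W - (A * W * Aᵀ + V) with hP
  -- Lyapunov recursion for D
  have hV' : W' - A * W' * Aᵀ = V := by
    nth_rewrite 1 [heq]; exact add_sub_cancel_left _ _
  have hDlyap : D - A * D * Aᵀ = P := by
    rw [hD, hP, Matrix.mul_sub, Matrix.sub_mul, ← hV']; abel
  refine posSemidef_iff_dotProduct_mulVec.mpr ⟨?_, ?_⟩
  · -- Hermitian
    have hDt : Dᵀ = D := by rw [hD, transpose_sub, hW, hW']
    show Dᴴ = D
    ext i j
    simp only [conjTranspose_apply, star_trivial]
    exact congrFun (congrFun hDt i) j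
  · intro x
    simp only [star_trivial]
    -- entries of A^N tend to zero
    have hent : ∀ i j, Tendsto (fun N => (A ^ N) i j) atTop (𝓝 0) := by
      intro i j
      have hmap : ∀ N, (A.map (algebraMap ℝ ℂ)) ^ N = (A ^ N).map (algebraMap ℝ ℂ) := by
        intro N
        exact (map_pow ((algebraMap ℝ ℂ).mapMatrix) A N).symm ▸ rfl
      have h1 := pow_entry_tendsto_zero (A.map (algebraMap ℝ ℂ)) hA i j
      have h2 : Tendsto (fun N => ((A ^ N) i j : ℂ)) atTop (𝓝 0) := by
        refine h1.congr fun N => ?_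
        rw [hmap N]; simp [Matrix.map_apply]
      have := (Complex.continuous_re.tendsto 0).comp h2
      simpa [Function.comp_def] using this
    -- the sequence of quadratic forms
    set y : ℕ → Fin n → ℝ := fun N => (Aᵀ ^ N) *ᵥ x with hy
    set f : ℕ → ℝ := fun N => y N ⬝ᵥ (D *ᵥ y N) with hf
    have hy0 : y 0 = x := by simp [hy]
    have hysucc : ∀ N, y (N + 1) = Aᵀ *ᵥ y N := by
      intro N
      rw [hy]
      simp only [pow_succ']
      rw [← mulVec_mulVec]
    -- quadratic form identity
    have hquad : ∀ z : Fin n → ℝ, (Aᵀ *ᵥ z) ⬝ᵥ (D *ᵥ (Aᵀ *ᵥ z)) = z ⬝ᵥ ((A * D * Aᵀ) *ᵥ z) := by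
      intro z
      rw [← mulVec_mulVec, ← mulVec_mulVec, dotProduct_mulVec z A, mulVec_transpose]
    have hstep : ∀ N, f (N + 1) ≤ f N := by
      intro N
      have h0 : 0 ≤ y N ⬝ᵥ (P *ᵥ y N) := by simpa using hineq.dotProduct_mulVec_nonneg (y N)
      have : f N - f (N + 1) = y N ⬝ᵥ (P *ᵥ y N) := by
        show y N ⬝ᵥ (D *ᵥ y N) - y (N + 1) ⬝ᵥ (D *ᵥ y (N + 1)) = _
        rw [hysucc N, hquad (y N), ← hDlyap]
        simp [hD, Matrix.sub_mulVec, dotProduct_sub]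
      linarith [this ▸ h0]
    have hanti : ∀ N, f N ≤ f 0 := by
      intro N
      induction N with
      | zero => exact le_refl _
      | succ k ih => exact (hstep k).trans ih
    -- f tends to zero
    have hyt : Tendsto y atTop (𝓝 0) := by
      rw [tendsto_pi_nhds]
      intro i
      have : ∀ N, y N i = ∑ j, (A ^ N) j i * x j := by
        intro N
        rw [hy]
        simp [mulVec, dotProduct, ← Matrix.transpose_pow, Matrix.transpose_apply]
      simp only [this]
      have : Tendsto (fun N => ∑ j, (A ^ N) j i * x j) atTop (𝓝 (∑ j : Fin n, 0 * x j)) := by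
        exact tendsto_finset_sum _ fun j _ => (hent j i).mul tendsto_const_nhds
      simpa using this
    have hg : Continuous fun z : Fin n → ℝ => z ⬝ᵥ (D *ᵥ z) := by
      simp only [dotProduct, mulVec]
      exact continuous_finset_sum _ fun i _ => (continuous_apply i).mul
        (continuous_finset_sum _ fun j _ => continuous_const.mul (continuous_apply j))
    have hft : Tendsto f atTop (𝓝 0) := by
      have := (hg.tendsto 0).comp hyt
      simpa [hf, Function.comp_def] using this
    have : (0 : ℝ) ≤ f 0 := le_of_tendsto hft (Eventually.of_forall hanti)
    simpa [hf, hy0] using this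
end

section
/- (Sufficiency direction of the matrix S-lemma, Theorem 1, in the scalar-multiplier rank-one case.) Let H, C, A be symmetric real matrices (H: m×m, C: n×n, A: d×d replaced appropriately), F an m×n matrix, G an m×d matrix, B a d×n matrix, P a symmetric PSD d×d matrix, and λ ≥ 0. If the (m+n+d)×(m+n+d) block matrix [[H, F, G],[Fᵀ, C - λIₙ, Bᵀ],[Gᵀ, B, A + λP]] is positive semidefinite, then for every d×n matrix X satisfying Iₙ - XᵀPX ⪰ 0, the block matrix [[H, F + GX],[(F + GX)ᵀ, C + XᵀB + BᵀX + XᵀAX]] is positive semidefinite. -/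
/-!
Conjugating the certificate by the graph lift `[[1, 0], [0, 1], [0, X]]` of `X` yields the target
matrix minus the block `diag(0, λ (1 - Xᵀ P X))`. Both are positive semidefinite, the first
because congruence preserves semidefiniteness, the second because `λ ≥ 0` and `Xᵀ P X ⪯ 1`;
hence so is their sum, the target.
-/

namespace Matrix

variable {l m n R : Type*} [Fintype l] [Fintype m] [Fintype n]

theorem PosSemidef.fromBlocks_zero_zero_zero [Ring R] [PartialOrder R] [StarRing R]
    [DecidableEq n] {Q : Matrix n n R} (hQ : Q.PosSemidef) :
    (fromBlocks (0 : Matrix m m R) 0 0 Q).PosSemidef := by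
  let E : Matrix n (m ⊕ n) R := fromCols 0 1
  have h : fromBlocks 0 0 0 Q = Eᴴ * Q * E := by
    simp [E, conjTranspose_fromCols_eq_fromRows_conjTranspose, fromRows_mul, ← fromRows_zero]
  exact h ▸ hQ.conjTranspose_mul_mul_same E

def graphLift (l : Type*) [Zero R] [One R] [DecidableEq l] [DecidableEq m] (X : Matrix n m R) :
    Matrix (l ⊕ m ⊕ n) (l ⊕ m) R :=
  fromBlocks 1 0 0 (fromRows 1 X)

theorem transpose_graphLift_mul_fromBlocks_mul_graphLift [CommRing R] [DecidableEq l]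
    [DecidableEq m]
    (H : Matrix l l R) (F : Matrix l m R) (G : Matrix l n R) (C : Matrix m m R)
    (B : Matrix n m R) (A : Matrix n n R) (X : Matrix n m R) :
    (graphLift l X)ᵀ * fromBlocks H (fromCols F G) (fromRows Fᵀ Gᵀ) (fromBlocks C Bᵀ B A) *
        graphLift l X =
      fromBlocks H (F + G * X) (F + G * X)ᵀ (C + Xᵀ * B + Bᵀ * X + Xᵀ * A * X) := by
  simp only [graphLift, fromBlocks_transpose, transpose_fromRows, transpose_one, transpose_zero,
    fromBlocks_multiply, fromCols_mul_fromRows, fromCols_mul_fromBlocks,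
    Matrix.mul_one, Matrix.one_mul, Matrix.mul_zero, Matrix.zero_mul, add_zero, zero_add]
  rw [transpose_add, transpose_mul, Matrix.add_mul, ← add_assoc]

end Matrix

open Matrix

theorem matrix_s_lemma_sufficiency_general {m n d : ℕ}
    (H : Matrix (Fin m) (Fin m) ℝ)
    (C : Matrix (Fin n) (Fin n) ℝ)
    (A : Matrix (Fin d) (Fin d) ℝ)
    (F : Matrix (Fin m) (Fin n) ℝ) (G : Matrix (Fin m) (Fin d) ℝ)
    (B : Matrix (Fin d) (Fin n) ℝ)
    (P : Matrix (Fin d) (Fin d) ℝ)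
    (lam : ℝ) (hlam : 0 ≤ lam)
    (hcert : (Matrix.fromBlocks H (Matrix.fromCols F G)
        (Matrix.fromRows Fᵀ Gᵀ)
        (Matrix.fromBlocks (C - lam • (1 : Matrix (Fin n) (Fin n) ℝ)) Bᵀ
          B (A + lam • P))).PosSemidef) :
    ∀ X : Matrix (Fin d) (Fin n) ℝ,
      ((1 : Matrix (Fin n) (Fin n) ℝ) - Xᵀ * P * X).PosSemidef →
      (Matrix.fromBlocks H (F + G * X) (F + G * X)ᵀ
        (C + Xᵀ * B + Bᵀ * X + Xᵀ * A * X)).PosSemidef := by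
  intro X hX
  have hcongr := hcert.conjTranspose_mul_mul_same (graphLift (Fin m) X)
  rw [conjTranspose_eq_transpose_of_trivial,
    transpose_graphLift_mul_fromBlocks_mul_graphLift] at hcongr
  have hslack := PosSemidef.fromBlocks_zero_zero_zero (m := Fin m) (hX.smul hlam)
  have hsplit : C + Xᵀ * B + Bᵀ * X + Xᵀ * A * X =
      (C - lam • 1 + Xᵀ * B + Bᵀ * X + Xᵀ * (A + lam • P) * X) + lam • (1 - Xᵀ * P * X) := by
    rw [Matrix.mul_add, Matrix.add_mul, Matrix.mul_smul, Matrix.smul_mul]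
    module
  have hsum := hcongr.add hslack
  rwa [fromBlocks_add, add_zero, add_zero, add_zero, ← hsplit] at hsum

theorem matrix_s_lemma_sufficiency {m n d : ℕ}
    (H : Matrix (Fin m) (Fin m) ℝ) (hH : Hᵀ = H)
    (C : Matrix (Fin n) (Fin n) ℝ) (hC : Cᵀ = C)
    (A : Matrix (Fin d) (Fin d) ℝ) (hA : Aᵀ = A)
    (F : Matrix (Fin m) (Fin n) ℝ) (G : Matrix (Fin m) (Fin d) ℝ)
    (B : Matrix (Fin d) (Fin n) ℝ)
    (P : Matrix (Fin d) (Fin d) ℝ) (hP : P.PosSemidef)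
    (lam : ℝ) (hlam : 0 ≤ lam)
    (hcert : (Matrix.fromBlocks H (Matrix.fromCols F G)
        (Matrix.fromRows Fᵀ Gᵀ)
        (Matrix.fromBlocks (C - lam • (1 : Matrix (Fin n) (Fin n) ℝ)) Bᵀ
          B (A + lam • P))).PosSemidef) :
    ∀ X : Matrix (Fin d) (Fin n) ℝ,
      ((1 : Matrix (Fin n) (Fin n) ℝ) - Xᵀ * P * X).PosSemidef →
      (Matrix.fromBlocks H (F + G * X) (F + G * X)ᵀ
        (C + Xᵀ * B + Bᵀ * X + Xᵀ * A * X)).PosSemidef :=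
  matrix_s_lemma_sufficiency_general H C A F G B P lam hlam hcert
end
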